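/- (Second derivative bound for the eigenvector, eigenvalue 0 case.) Let d ≥ 1, λ > 0, M₁ ≥ 0, M₂ ≥ 0. Let H : ℝ → Matrix (Fin d) (Fin d) ℂ be twice differentiable on [0,1] with each H(s) Hermitian, ‖H'(s)‖ ≤ M₁ and ‖H''(s)‖ ≤ M₂ for all s ∈ [0,1], and let Ψ : ℝ → EuclideanSpace ℂ (Fin d) be twice differentiable on [0,1] with ‖Ψ(s)‖ = 1, H(s) Ψ(s) = 0, and ⟨Ψ'(s), Ψ(s)⟩ = 0 for all s ∈ [0,1]. Assume that for every s ∈ [0,1] the kernel of H(s) is spanned by Ψ(s) and every nonzero eigenvalue μ of H(s) satisfies |μ| ≥ λ. Then for every s ∈ [0,1], ‖Ψ''(s)‖ ≤ M₂/λ + 3·M₁²/λ². -/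

import Mathlib

open scoped InnerProductSpace

/-- The continuous linear map on Euclidean space associated to a matrix;
its operator norm is the operator norm induced by the Euclidean norm. -/
noncomputable def opCLM {d : ℕ} (A : Matrix (Fin d) (Fin d) ℂ) :
    EuclideanSpace ℂ (Fin d) →L[ℂ] EuclideanSpace ℂ (Fin d) :=
  Matrix.toEuclideanCLM (𝕜 := ℂ) A

/-!
Differentiating `H Ψ = 0` twice and `⟪Ψ', Ψ⟫ = 0` once gives `H Ψ' = -H' Ψ`,
`H Ψ'' = -(H'' Ψ + 2 H' Ψ')` and `⟪Ψ, Ψ''⟫ = -‖Ψ'‖²`. Expanding in an eigenbasis of `H`, the gap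
shows `λ ‖v‖ ≤ ‖H v‖` for `v ⊥ Ψ`. Hence `‖Ψ'‖ ≤ M₁ / λ`, the component of `Ψ''` orthogonal to `Ψ`
has norm at most `(M₂ + 2 M₁ ‖Ψ'‖) / λ`, and its component along `Ψ` has norm `‖Ψ'‖² ≤ M₁² / λ²`.
-/

section SpectralGap

variable {𝕜 E : Type*} [RCLike 𝕜] [NormedAddCommGroup E] [InnerProductSpace 𝕜 E]
  [FiniteDimensional 𝕜 E] {lam : ℝ}

theorem LinearMap.IsSymmetric.mul_norm_le_norm_apply_of_mem_orthogonal_ker {T : E →ₗ[𝕜] E}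
    (hT : T.IsSymmetric) (hlam : 0 ≤ lam)
    (hgap : ∀ (μ : 𝕜) (v : E), v ≠ 0 → T v = μ • v → μ ≠ 0 → lam ≤ ‖μ‖)
    {v : E} (hv : v ∈ (LinearMap.ker T)ᗮ) : lam * ‖v‖ ≤ ‖T v‖ := by
  set b := hT.eigenvectorBasis rfl
  set μ := hT.eigenvalues rfl
  have hcoord : ∀ i, lam * ‖⟪b i, v⟫_𝕜‖ ≤ ‖⟪b i, T v⟫_𝕜‖ := by
    intro i
    have hTb : ⟪b i, T v⟫_𝕜 = μ i * ⟪b i, v⟫_𝕜 := by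
      rw [← hT, hT.apply_eigenvectorBasis, inner_smul_left, RCLike.conj_ofReal]
    by_cases hμ : μ i = 0
    · have hb : b i ∈ LinearMap.ker T := by
        simp [LinearMap.mem_ker, b, μ, hμ]
      simp [Submodule.inner_right_of_mem_orthogonal hb hv]
    · have := hgap (μ i) (b i) (b.orthonormal.ne_zero i) (hT.apply_eigenvectorBasis rfl i)
        (by exact_mod_cast hμ)
      rw [hTb, norm_mul]
      exact mul_le_mul_of_nonneg_right this (norm_nonneg _)
  have hsq : (lam * ‖v‖) ^ 2 ≤ ‖T v‖ ^ 2 := by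
    rw [mul_pow, ← b.sum_sq_norm_inner_right v, ← b.sum_sq_norm_inner_right (T v),
      Finset.mul_sum]
    gcongr with i
    rw [← mul_pow]
    exact pow_le_pow_left₀ (by positivity) (hcoord i) 2
  exact (pow_le_pow_iff_left₀ (by positivity) (norm_nonneg _) two_ne_zero).mp hsq

theorem LinearMap.IsSymmetric.mul_norm_le_norm_apply_add_norm_inner {T : E →ₗ[𝕜] E}
    (hT : T.IsSymmetric) (hlam : 0 ≤ lam)
    (hgap : ∀ (μ : 𝕜) (v : E), v ≠ 0 → T v = μ • v → μ ≠ 0 → lam ≤ ‖μ‖)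
    {ψ : E} (hker : LinearMap.ker T ≤ 𝕜 ∙ ψ) (hTψ : T ψ = 0) (hψ : ‖ψ‖ = 1) (w : E) :
    lam * ‖w‖ ≤ ‖T w‖ + lam * ‖⟪ψ, w⟫_𝕜‖ := by
  set Q := w - ⟪ψ, w⟫_𝕜 • ψ
  have hQ : Q ∈ (LinearMap.ker T)ᗮ := by
    refine Submodule.orthogonal_le hker (Submodule.mem_orthogonal_singleton_iff_inner_right.mpr ?_)
    rw [inner_sub_right, inner_smul_right, inner_self_eq_norm_sq_to_K, hψ]
    simp
  have hTQ : T Q = T w := by simp [Q, hTψ]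
  have hw : ‖w‖ ≤ ‖Q‖ + ‖⟪ψ, w⟫_𝕜‖ := by
    calc ‖w‖ = ‖Q + ⟪ψ, w⟫_𝕜 • ψ‖ := by rw [sub_add_cancel]
      _ ≤ ‖Q‖ + ‖⟪ψ, w⟫_𝕜 • ψ‖ := norm_add_le _ _
      _ = ‖Q‖ + ‖⟪ψ, w⟫_𝕜‖ := by rw [norm_smul, hψ, mul_one]
  calc lam * ‖w‖ ≤ lam * ‖Q‖ + lam * ‖⟪ψ, w⟫_𝕜‖ := by rw [← mul_add]; gcongr
    _ ≤ ‖T w‖ + lam * ‖⟪ψ, w⟫_𝕜‖ := by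
      rw [← hTQ]; gcongr; exact hT.mul_norm_le_norm_apply_of_mem_orthogonal_ker hlam hgap hQ

/-- `T, A, B, ψ, ψ₁, ψ₂` stand for `H, H', H'', Ψ, Ψ', Ψ''`. -/
theorem LinearMap.IsSymmetric.norm_le_of_second_order_perturbation {T : E →L[𝕜] E}
    (hT : (T : E →ₗ[𝕜] E).IsSymmetric)
    (hlam : 0 < lam) (hgap : ∀ (μ : 𝕜) (v : E), v ≠ 0 → T v = μ • v → μ ≠ 0 → lam ≤ ‖μ‖)
    {ψ ψ₁ ψ₂ : E} (hker : LinearMap.ker (T : E →ₗ[𝕜] E) ≤ 𝕜 ∙ ψ) (hTψ : T ψ = 0) (hψ : ‖ψ‖ = 1)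
    {A B : E →L[𝕜] E} {M₁ M₂ : ℝ} (hA : ‖A‖ ≤ M₁) (hB : ‖B‖ ≤ M₂)
    (h₁ : A ψ + T ψ₁ = 0) (h₂ : B ψ + A ψ₁ + (A ψ₁ + T ψ₂) = 0)
    (hphase : ⟪ψ₁, ψ⟫_𝕜 = 0) (hphase' : ⟪ψ₁, ψ₁⟫_𝕜 + ⟪ψ₂, ψ⟫_𝕜 = 0) :
    ‖ψ₂‖ ≤ M₂ / lam + 3 * M₁ ^ 2 / lam ^ 2 := by
  have hcoer : ∀ w, lam * ‖w‖ ≤ ‖T w‖ + lam * ‖⟪ψ, w⟫_𝕜‖ :=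
    hT.mul_norm_le_norm_apply_add_norm_inner hlam.le hgap hker hTψ hψ
  have hψ₁ : lam * ‖ψ₁‖ ≤ M₁ := by
    have hTψ₁ : ‖T ψ₁‖ ≤ M₁ := by
      rw [eq_neg_of_add_eq_zero_right h₁, norm_neg, ← mul_one M₁, ← hψ]
      exact A.le_of_opNorm_le hA ψ
    have := hcoer ψ₁
    rw [inner_eq_zero_symm.mp hphase, norm_zero, mul_zero, add_zero] at this
    exact this.trans hTψ₁
  have hTψ₂ : ‖T ψ₂‖ ≤ M₂ + 2 * M₁ * ‖ψ₁‖ := by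
    have hTψ₂ : T ψ₂ = -(B ψ + A ψ₁ + A ψ₁) := by
      rw [eq_neg_iff_add_eq_zero, ← h₂]; abel
    have hBψ : ‖B ψ‖ ≤ M₂ := by simpa [hψ] using B.le_of_opNorm_le hB ψ
    rw [hTψ₂, norm_neg]
    linarith [norm_add₃_le (a := B ψ) (b := A ψ₁) (c := A ψ₁), A.le_of_opNorm_le hA ψ₁]
  have hinner : ‖⟪ψ, ψ₂⟫_𝕜‖ = ‖ψ₁‖ ^ 2 := by
    rw [← inner_conj_symm, RCLike.norm_conj, eq_neg_of_add_eq_zero_right hphase', norm_neg,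
      inner_self_eq_norm_sq_to_K]
    simp
  have hψ₂ := hcoer ψ₂
  rw [hinner] at hψ₂
  have hM₁ : 0 ≤ M₁ := (mul_nonneg hlam.le (norm_nonneg _)).trans hψ₁
  have key : lam * ‖ψ₂‖ * lam ≤ M₂ * lam + 3 * M₁ ^ 2 := by
    nlinarith [mul_le_mul_of_nonneg_right hψ₂ hlam.le, mul_le_mul_of_nonneg_right hTψ₂ hlam.le,
      mul_le_mul_of_nonneg_left hψ₁ hM₁,
      mul_self_le_mul_self (mul_nonneg hlam.le (norm_nonneg ψ₁)) hψ₁]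
  calc ‖ψ₂‖ = lam * ‖ψ₂‖ * lam / lam ^ 2 := by field_simp
    _ ≤ (M₂ * lam + 3 * M₁ ^ 2) / lam ^ 2 := by gcongr
    _ = M₂ / lam + 3 * M₁ ^ 2 / lam ^ 2 := by field_simp

end SpectralGap

theorem HasDerivAt.eq_zero_of_eqOn_zero {𝕜 F : Type*} [NontriviallyNormedField 𝕜]
    [NormedAddCommGroup F] [NormedSpace 𝕜 F] {f : 𝕜 → F} {f' : F} {x : 𝕜} {s : Set 𝕜}
    (hf : HasDerivAt f f' x) (hs : UniqueDiffWithinAt 𝕜 s x) (hx : x ∈ s) (h0 : Set.EqOn f 0 s) :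
    f' = 0 :=
  hs.eq_deriv s hf.hasDerivWithinAt ((hasDerivWithinAt_const x s 0).congr h0 (h0 hx))

theorem HasDerivAt.clm_apply_of_isScalarTower {𝕜 𝕜' E F : Type*} [NontriviallyNormedField 𝕜]
    [NontriviallyNormedField 𝕜'] [NormedAlgebra 𝕜 𝕜'] [NormedAddCommGroup E] [NormedSpace 𝕜' E]
    [NormedSpace 𝕜 E] [IsScalarTower 𝕜 𝕜' E] [NormedAddCommGroup F] [NormedSpace 𝕜' F]
    [NormedSpace 𝕜 F] [IsScalarTower 𝕜 𝕜' F] {c : 𝕜 → E →L[𝕜'] F} {c' : E →L[𝕜'] F}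
    {u : 𝕜 → E} {u' : E} {x : 𝕜} (hc : HasDerivAt c c' x) (hu : HasDerivAt u u' x) :
    HasDerivAt (fun y => c y (u y)) (c' (u x) + c x u') x :=
  ((ContinuousLinearMap.restrictScalarsL 𝕜' E F 𝕜 𝕜).hasFDerivAt.comp_hasDerivAt x hc).clm_apply hu

theorem isSymmetric_opCLM {d : ℕ} {A : Matrix (Fin d) (Fin d) ℂ} (hA : A.IsHermitian) :
    (opCLM A : EuclideanSpace ℂ (Fin d) →ₗ[ℂ] EuclideanSpace ℂ (Fin d)).IsSymmetric := by
  rw [opCLM, Matrix.coe_toEuclideanCLM_eq_toEuclideanLin]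
  exact Matrix.isSymmetric_toEuclideanLin_iff.mpr hA

theorem eigenvector_second_deriv_bound_general {d : ℕ}
    (lam M₁ M₂ : ℝ) (hlam : 0 < lam)
    (H H' H'' : ℝ → Matrix (Fin d) (Fin d) ℂ)
    (hHd1 : ∀ s ∈ Set.Icc (0:ℝ) 1, HasDerivAt (fun t => opCLM (H t)) (opCLM (H' s)) s)
    (hHd2 : ∀ s ∈ Set.Icc (0:ℝ) 1, HasDerivAt (fun t => opCLM (H' t)) (opCLM (H'' s)) s)
    (hherm : ∀ s ∈ Set.Icc (0:ℝ) 1, (H s).IsHermitian)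
    (hM₁b : ∀ s ∈ Set.Icc (0:ℝ) 1, ‖opCLM (H' s)‖ ≤ M₁)
    (hM₂b : ∀ s ∈ Set.Icc (0:ℝ) 1, ‖opCLM (H'' s)‖ ≤ M₂)
    (Ψ Ψ' Ψ'' : ℝ → EuclideanSpace ℂ (Fin d))
    (hΨd1 : ∀ s ∈ Set.Icc (0:ℝ) 1, HasDerivAt Ψ (Ψ' s) s)
    (hΨd2 : ∀ s ∈ Set.Icc (0:ℝ) 1, HasDerivAt Ψ' (Ψ'' s) s)
    (hΨnorm : ∀ s ∈ Set.Icc (0:ℝ) 1, ‖Ψ s‖ = 1)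
    (heig : ∀ s ∈ Set.Icc (0:ℝ) 1, opCLM (H s) (Ψ s) = 0)
    (hphase : ∀ s ∈ Set.Icc (0:ℝ) 1, ⟪Ψ' s, Ψ s⟫_ℂ = 0)
    (hker : ∀ s ∈ Set.Icc (0:ℝ) 1, ∀ v : EuclideanSpace ℂ (Fin d),
      opCLM (H s) v = 0 → ∃ c : ℂ, v = c • Ψ s)
    (hgap : ∀ s ∈ Set.Icc (0:ℝ) 1, ∀ (μ : ℂ) (v : EuclideanSpace ℂ (Fin d)), v ≠ 0 →
      opCLM (H s) v = μ • v → μ ≠ 0 → lam ≤ ‖μ‖) :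
    ∀ s ∈ Set.Icc (0:ℝ) 1, ‖Ψ'' s‖ ≤ M₂ / lam + 3 * M₁ ^ 2 / lam ^ 2 := by
  have hI : UniqueDiffOn ℝ (Set.Icc (0:ℝ) 1) := uniqueDiffOn_Icc one_pos
  have h₁ : ∀ t ∈ Set.Icc (0:ℝ) 1, opCLM (H' t) (Ψ t) + opCLM (H t) (Ψ' t) = 0 := fun t ht =>
    ((hHd1 t ht).clm_apply_of_isScalarTower (hΨd1 t ht)).eq_zero_of_eqOn_zero (hI t ht) ht heig
  intro s hs
  have h₂ : opCLM (H'' s) (Ψ s) + opCLM (H' s) (Ψ' s)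
      + (opCLM (H' s) (Ψ' s) + opCLM (H s) (Ψ'' s)) = 0 :=
    (((hHd2 s hs).clm_apply_of_isScalarTower (hΨd1 s hs)).add
      ((hHd1 s hs).clm_apply_of_isScalarTower (hΨd2 s hs))).eq_zero_of_eqOn_zero (hI s hs) hs h₁
  have hphase' : ⟪Ψ' s, Ψ' s⟫_ℂ + ⟪Ψ'' s, Ψ s⟫_ℂ = 0 :=
    ((hΨd2 s hs).inner ℂ (hΨd1 s hs)).eq_zero_of_eqOn_zero (hI s hs) hs hphase
  have hkerle : LinearMap.ker (opCLM (H s)).toLinearMap ≤ ℂ ∙ Ψ s := fun v hv => by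
    obtain ⟨c, rfl⟩ := hker s hs v (by simpa using hv)
    exact Submodule.smul_mem _ c (Submodule.mem_span_singleton_self _)
  exact (isSymmetric_opCLM (hherm s hs)).norm_le_of_second_order_perturbation hlam (hgap s hs)
    hkerle (heig s hs) (hΨnorm s hs) (hM₁b s hs) (hM₂b s hs) (h₁ s hs) h₂ (hphase s hs) hphase'

/-- **Second derivative bound for the eigenvector, eigenvalue 0 case.** -/
theorem eigenvector_second_deriv_bound {d : ℕ} (hd : 1 ≤ d)
    (lam M₁ M₂ : ℝ) (hlam : 0 < lam) (hM₁ : 0 ≤ M₁) (hM₂ : 0 ≤ M₂)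
    (H H' H'' : ℝ → Matrix (Fin d) (Fin d) ℂ)
    (hHd1 : ∀ s ∈ Set.Icc (0:ℝ) 1, HasDerivAt (fun t => opCLM (H t)) (opCLM (H' s)) s)
    (hHd2 : ∀ s ∈ Set.Icc (0:ℝ) 1, HasDerivAt (fun t => opCLM (H' t)) (opCLM (H'' s)) s)
    (hherm : ∀ s ∈ Set.Icc (0:ℝ) 1, (H s).IsHermitian)
    (hM₁b : ∀ s ∈ Set.Icc (0:ℝ) 1, ‖opCLM (H' s)‖ ≤ M₁)
    (hM₂b : ∀ s ∈ Set.Icc (0:ℝ) 1, ‖opCLM (H'' s)‖ ≤ M₂)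
    (Ψ Ψ' Ψ'' : ℝ → EuclideanSpace ℂ (Fin d))
    (hΨd1 : ∀ s ∈ Set.Icc (0:ℝ) 1, HasDerivAt Ψ (Ψ' s) s)
    (hΨd2 : ∀ s ∈ Set.Icc (0:ℝ) 1, HasDerivAt Ψ' (Ψ'' s) s)
    (hΨnorm : ∀ s ∈ Set.Icc (0:ℝ) 1, ‖Ψ s‖ = 1)
    (heig : ∀ s ∈ Set.Icc (0:ℝ) 1, opCLM (H s) (Ψ s) = 0)
    (hphase : ∀ s ∈ Set.Icc (0:ℝ) 1, ⟪Ψ' s, Ψ s⟫_ℂ = 0)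
    (hker : ∀ s ∈ Set.Icc (0:ℝ) 1, ∀ v : EuclideanSpace ℂ (Fin d),
      opCLM (H s) v = 0 → ∃ c : ℂ, v = c • Ψ s)
    (hgap : ∀ s ∈ Set.Icc (0:ℝ) 1, ∀ (μ : ℂ) (v : EuclideanSpace ℂ (Fin d)), v ≠ 0 →
      opCLM (H s) v = μ • v → μ ≠ 0 → lam ≤ ‖μ‖) :
    ∀ s ∈ Set.Icc (0:ℝ) 1, ‖Ψ'' s‖ ≤ M₂ / lam + 3 * M₁ ^ 2 / lam ^ 2 :=
  eigenvector_second_deriv_bound_general lam M₁ M₂ hlam H H' H'' hHd1 hHd2 hherm hM₁b hM₂b Ψ Ψ' Ψ''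
    hΨd1 hΨd2 hΨnorm heig hphase hker hgap
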